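/- Let $a, b > 0$ be real numbers. Then the function $r \mapsto \dfrac{\sinh(a r)}{\sin(b r)}$ is strictly monotone increasing on the interval $(0, \pi/b)$. -/

import Mathlib

/-!
With `f r = sinh (a r)` and `g r = sin (b r)`, the derivative of `f / g` is `W / g²`, where
`W = f' g - f g'`. Since `f'' = a² f` and `g'' = -b² g`, we get `W' = f'' g - f g'' = (a² + b²) f g`,
which is positive on `(0, π/b)`; as `W 0 = 0`, `W` and hence `(f / g)'` are positive there.
-/

open Real Set

namespace SinhDivSin

variable (a b : ℝ)

noncomputable def wronskian (r : ℝ) : ℝ :=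
  a * cosh (a * r) * sin (b * r) - b * sinh (a * r) * cos (b * r)

@[simp]
lemma wronskian_zero : wronskian a b 0 = 0 := by
  simp [wronskian]

lemma continuous_wronskian : Continuous (wronskian a b) := by
  unfold wronskian
  fun_prop

lemma hasDerivAt_wronskian (r : ℝ) :
    HasDerivAt (wronskian a b) ((a ^ 2 + b ^ 2) * (sinh (a * r) * sin (b * r))) r := by
  have ha : HasDerivAt (a * ·) a r := hasDerivAt_const_mul a
  have hb : HasDerivAt (b * ·) b r := hasDerivAt_const_mul b
  exact (((ha.cosh.const_mul a).mul hb.sin).sub ((ha.sinh.const_mul b).mul hb.cos)).congr_deriv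
    (by ring)

lemma hasDerivAt_sinh_div_sin {r : ℝ} (hr : sin (b * r) ≠ 0) :
    HasDerivAt (fun r ↦ sinh (a * r) / sin (b * r)) (wronskian a b r / sin (b * r) ^ 2) r :=
  ((hasDerivAt_const_mul a).sinh.div (hasDerivAt_const_mul b).sin hr).congr_deriv
    (by unfold wronskian; ring)

variable {a b}

lemma sin_mul_pos_of_mem_Ioo (hb : 0 < b) {r : ℝ} (hr : r ∈ Ioo 0 (π / b)) : 0 < sin (b * r) :=
  sin_pos_of_pos_of_lt_pi (mul_pos hb hr.1) (by rw [← lt_div_iff₀' hb]; exact hr.2)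

lemma strictMonoOn_wronskian (ha : 0 < a) (hb : 0 < b) :
    StrictMonoOn (wronskian a b) (Icc 0 (π / b)) := by
  refine strictMonoOn_of_deriv_pos (convex_Icc _ _) (continuous_wronskian a b).continuousOn ?_
  intro r hr
  rw [interior_Icc] at hr
  have hsinh : 0 < sinh (a * r) := sinh_pos_iff.2 (mul_pos ha hr.1)
  have hsin := sin_mul_pos_of_mem_Ioo hb hr
  rw [(hasDerivAt_wronskian a b r).deriv]
  positivity

lemma wronskian_pos (ha : 0 < a) (hb : 0 < b) {r : ℝ} (hr : r ∈ Ioo 0 (π / b)) :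
    0 < wronskian a b r := by
  have hπb : 0 ≤ π / b := (div_pos pi_pos hb).le
  simpa using strictMonoOn_wronskian ha hb (left_mem_Icc.2 hπb) (Ioo_subset_Icc_self hr) hr.1

end SinhDivSin

open SinhDivSin in
/-- For `a, b > 0`, the function `r ↦ sinh(a r)/sin(b r)` is strictly
monotone increasing on `(0, π/b)`. -/
theorem sinh_div_sin_strictMono (a b : ℝ) (ha : 0 < a) (hb : 0 < b) :
    StrictMonoOn (fun r => Real.sinh (a * r) / Real.sin (b * r))
      (Set.Ioo 0 (Real.pi / b)) := by
  have hderiv : ∀ r ∈ Ioo 0 (π / b), HasDerivAt (fun r ↦ sinh (a * r) / sin (b * r))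
      (wronskian a b r / sin (b * r) ^ 2) r :=
    fun r hr ↦ hasDerivAt_sinh_div_sin a b (sin_mul_pos_of_mem_Ioo hb hr).ne'
  refine strictMonoOn_of_deriv_pos (convex_Ioo _ _)
    (fun r hr ↦ (hderiv r hr).continuousAt.continuousWithinAt) fun r hr ↦ ?_
  rw [interior_Ioo] at hr
  rw [(hderiv r hr).deriv]
  exact div_pos (wronskian_pos ha hb hr) (pow_pos (sin_mul_pos_of_mem_Ioo hb hr) 2)
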